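/- For a smooth positive periodic function v on the 3-torus, ∫_{T³} v^{-2} |∇v|^6 dx ≤ 2 ∫_{T³} |∇v|² |Δv|² dx + 8 ∫_{T³} |∇|∇v|²|² dx. -/

import Mathlib

open MeasureTheory Real

/-- Partial derivative in direction `i`. -/
noncomputable def pd (i : Fin 3) (f : (Fin 3 → ℝ) → ℝ) : (Fin 3 → ℝ) → ℝ :=
  fun x => fderiv ℝ f x (Pi.single i 1)

/-- The fundamental domain of the 3-torus, the unit cube. -/
def T3 : Set (Fin 3 → ℝ) := Set.univ.pi fun _ => Set.Icc 0 1

/-- `f` is 1-periodic in each coordinate direction. -/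
def Periodic3 (f : (Fin 3 → ℝ) → ℝ) : Prop :=
  ∀ (x : Fin 3 → ℝ) (i : Fin 3), f (x + Pi.single i 1) = f x


lemma contDiff_pd (f : (Fin 3 → ℝ) → ℝ) (hf : ContDiff ℝ (⊤ : ℕ∞) f) (i : Fin 3) :
    ContDiff ℝ (⊤ : ℕ∞) (pd i f) :=
  (hf.fderiv_right (by simp)).clm_apply contDiff_const

lemma periodic_pd (f : (Fin 3 → ℝ) → ℝ) (hf : ContDiff ℝ (⊤ : ℕ∞) f) (hp : Periodic3 f)
    (i : Fin 3) : Periodic3 (pd i f) := by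
  intro x j
  have hfx : HasFDerivAt f (fderiv ℝ f (x + Pi.single j 1)) (x + Pi.single j 1) :=
    ((hf.differentiable (by simp)) (x + Pi.single j 1)).hasFDerivAt
  have htr : HasFDerivAt (fun y : Fin 3 → ℝ => y + Pi.single j 1)
      (ContinuousLinearMap.id ℝ (Fin 3 → ℝ)) x := by
    simpa using (hasFDerivAt_id (𝕜 := ℝ) x).add_const (Pi.single j 1)
  have hcomp : HasFDerivAt (fun y => f (y + Pi.single j 1))
      ((fderiv ℝ f (x + Pi.single j 1)).comp (ContinuousLinearMap.id ℝ (Fin 3 → ℝ))) x :=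
    hfx.comp x htr
  rw [ContinuousLinearMap.comp_id] at hcomp
  have heq : (fun y => f (y + Pi.single j 1)) = f := funext fun y => hp y j
  rw [heq] at hcomp
  have hcomp' : HasFDerivAt f (fderiv ℝ f (x + Pi.single j 1)) x := hcomp
  have hfx2 := hcomp'.fderiv
  show fderiv ℝ f (x + Pi.single j 1) (Pi.single i 1) = fderiv ℝ f x (Pi.single i 1)
  rw [hfx2]

lemma T3_eq : T3 = Set.Icc (0 : Fin 3 → ℝ) 1 := by
  rw [T3]; exact Set.pi_univ_Icc 0 1

lemma hT3meas : MeasurableSet T3 := by rw [T3_eq]; exact measurableSet_Icc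

lemma integrableOn_T3 (f : (Fin 3 → ℝ) → ℝ) (hf : Continuous f) : IntegrableOn f T3 := by
  rw [T3_eq]; exact hf.continuousOn.integrableOn_compact isCompact_Icc

lemma insertNth_one_eq (i : Fin 3) (y : Fin 2 → ℝ) :
    i.insertNth (1 : ℝ) y = i.insertNth (0 : ℝ) y + (Pi.single i 1 : Fin 3 → ℝ) := by
  funext j
  rcases eq_or_ne j i with rfl | hj
  · simp
  · rcases Fin.exists_succAbove_eq hj with ⟨k, rfl⟩
    simp [Fin.insertNth_apply_succAbove, Pi.single_eq_of_ne (Fin.succAbove_ne i k)]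

lemma integral_pd_div_eq_zero (F : Fin 3 → (Fin 3 → ℝ) → ℝ)
    (hF : ∀ i, ContDiff ℝ (⊤ : ℕ∞) (F i)) (hFp : ∀ i, Periodic3 (F i)) :
    ∫ x in T3, ∑ i : Fin 3, pd i (F i) x = 0 := by
  have hle : (0 : Fin 3 → ℝ) ≤ 1 := fun i => zero_le_one
  have hcont : ∀ i : Fin 3, Continuous (pd i (F i)) := fun i => (contDiff_pd _ (hF i) i).continuous
  have Hi : IntegrableOn (fun x => ∑ i : Fin 3, fderiv ℝ (F i) x (Pi.single i 1))
      (Set.Icc (0 : Fin 3 → ℝ) 1) :=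
    ((continuous_finset_sum _ fun i _ => hcont i).continuousOn).integrableOn_compact isCompact_Icc
  have h := MeasureTheory.integral_divergence_of_hasFDerivAt_off_countable'
    (0 : Fin 3 → ℝ) 1 hle F (fun i x => fderiv ℝ (F i) x) ∅ Set.countable_empty
    (fun i => (hF i).continuous.continuousOn)
    (fun x _ i => (((hF i).differentiable (by simp)) x).hasFDerivAt) Hi
  have hfaces : ∀ i : Fin 3,
      ((∫ y in Set.Icc ((0 : Fin 3 → ℝ) ∘ i.succAbove) ((1 : Fin 3 → ℝ) ∘ i.succAbove),
          F i (i.insertNth ((1 : Fin 3 → ℝ) i) y)) -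
        ∫ y in Set.Icc ((0 : Fin 3 → ℝ) ∘ i.succAbove) ((1 : Fin 3 → ℝ) ∘ i.succAbove),
          F i (i.insertNth ((0 : Fin 3 → ℝ) i) y)) = 0 := by
    intro i
    have hb : ∀ y : Fin 2 → ℝ,
        F i (i.insertNth ((1 : Fin 3 → ℝ) i) y) = F i (i.insertNth ((0 : Fin 3 → ℝ) i) y) := by
      intro y
      have h1 : ((1 : Fin 3 → ℝ) i) = (1 : ℝ) := rfl
      have h0 : ((0 : Fin 3 → ℝ) i) = (0 : ℝ) := rfl
      rw [h1, h0, insertNth_one_eq, hFp i _ i]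
    simp only [hb, sub_self]
  calc ∫ x in T3, ∑ i : Fin 3, pd i (F i) x
      = ∫ x in Set.Icc (0 : Fin 3 → ℝ) 1, ∑ i : Fin 3, fderiv ℝ (F i) x (Pi.single i 1) := by
        rw [T3_eq]; rfl
    _ = 0 := h.trans (Finset.sum_eq_zero fun i _ => hfaces i)

lemma pd_formula (i : Fin 3) (a b c : (Fin 3 → ℝ) → ℝ) (x : Fin 3 → ℝ)
    (ha : ContDiff ℝ (⊤ : ℕ∞) a) (hb : ContDiff ℝ (⊤ : ℕ∞) b) (hc : ContDiff ℝ (⊤ : ℕ∞) c) (hax : a x ≠ 0) :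
    pd i (fun y => (a y)⁻¹ * b y ^ 2 * c y) x
      = -((a x ^ 2)⁻¹) * pd i a x * b x ^ 2 * c x
        + 2 * (a x)⁻¹ * b x * pd i b x * c x
        + (a x)⁻¹ * b x ^ 2 * pd i c x := by
  have ha' : HasFDerivAt a (fderiv ℝ a x) x := ((ha.differentiable (by simp)) x).hasFDerivAt
  have hb' : HasFDerivAt b (fderiv ℝ b x) x := ((hb.differentiable (by simp)) x).hasFDerivAt
  have hc' : HasFDerivAt c (fderiv ℝ c x) x := ((hc.differentiable (by simp)) x).hasFDerivAt
  have hA : HasFDerivAt (fun y => (a y)⁻¹) ((-((a x) ^ 2)⁻¹) • fderiv ℝ a x) x := by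
    have h := (hasFDerivAt_inv hax).comp x ha'
    have heq : ((1 : ℝ →L[ℝ] ℝ).smulRight (-(a x ^ 2)⁻¹)).comp (fderiv ℝ a x)
        = (-((a x) ^ 2)⁻¹) • fderiv ℝ a x := by
      ext ξ
      simp [mul_comm]
    rw [← heq]
    exact h
  have hB : HasFDerivAt (fun y => b y ^ 2) ((2 * b x) • fderiv ℝ b x) x := by
    have heq : (fun y => b y ^ 2) = fun y => b y * b y := by funext y; ring
    rw [heq, show (2 * b x) • fderiv ℝ b x
      = b x • fderiv ℝ b x + b x • fderiv ℝ b x from by rw [← add_smul, two_mul]]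
    exact hb'.mul hb'
  have hAB := hA.mul hB
  have hABC := hAB.mul hc'
  have hf : fderiv ℝ (fun y => (a y)⁻¹ * b y ^ 2 * c y) x
      = ((a x)⁻¹ * b x ^ 2) • fderiv ℝ c x
        + c x • ((a x)⁻¹ • ((2 * b x) • fderiv ℝ b x)
          + (b x ^ 2) • ((-((a x) ^ 2)⁻¹) • fderiv ℝ a x)) := hABC.fderiv
  show fderiv ℝ (fun y => (a y)⁻¹ * b y ^ 2 * c y) x (Pi.single i 1) = _
  rw [hf]
  simp only [ContinuousLinearMap.add_apply, ContinuousLinearMap.smul_apply, smul_eq_mul, pd]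
  ring

lemma pointwise_ineq (V W D P S : ℝ) (hV : 0 < V) (hW : 0 ≤ W) (hS : 0 ≤ S)
    (hCS : P ^ 2 ≤ W * S) :
    V⁻¹ * W ^ 2 * D + 2 * V⁻¹ * W * P
      ≤ (1 / 2) * ((V ^ 2)⁻¹ * W ^ 3) + W * D ^ 2 + 4 * S := by
  have hc : 0 < V⁻¹ := inv_pos.2 hV
  have hV2 : (V ^ 2)⁻¹ = V⁻¹ ^ 2 := (inv_pow V 2).symm
  rw [hV2]
  set c := V⁻¹ with hcdef
  have h1 : c * W ^ 2 * D ≤ (1 / 4) * c ^ 2 * W ^ 3 + W * D ^ 2 := by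
    nlinarith [mul_nonneg hW (sq_nonneg (c * W / 2 - D))]
  have h2 : 2 * c * W * P ≤ (1 / 4) * c ^ 2 * W ^ 3 + 4 * S := by
    rcases hW.eq_or_lt with h | h
    · have hP2 : P ^ 2 ≤ 0 := by rw [← h] at hCS; simpa using hCS
      have hP : P = 0 := by nlinarith [sq_nonneg P]
      rw [← h, hP]
      simp
      positivity
    · have key : W * (2 * c * W * P) ≤ W * ((1 / 4) * c ^ 2 * W ^ 3 + 4 * S) := by
        nlinarith [sq_nonneg (c * W ^ 2 / 2 - 2 * P), hCS]
      exact le_of_mul_le_mul_left key h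
  linarith

lemma main_aux (v w : (Fin 3 → ℝ) → ℝ) (hv : ContDiff ℝ (⊤ : ℕ∞) v) (hvpos : ∀ x, 0 < v x)
    (hper : Periodic3 v) (hw_def : w = fun y => ∑ k : Fin 3, (pd k v y) ^ 2) :
    (∫ x in T3, (v x ^ 2)⁻¹ * w x ^ 3)
      ≤ 2 * (∫ x in T3, w x * (∑ i : Fin 3, pd i (pd i v) x) ^ 2)
        + 8 * (∫ x in T3, ∑ i : Fin 3, (pd i w x) ^ 2) := by
  have hvne : ∀ x, v x ≠ 0 := fun x => (hvpos x).ne'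
  have hpd : ∀ k : Fin 3, ContDiff ℝ (⊤ : ℕ∞) (pd k v) := fun k => contDiff_pd v hv k
  have hw : ContDiff ℝ (⊤ : ℕ∞) w := by
    rw [hw_def]; exact ContDiff.sum fun k _ => (hpd k).pow 2
  have hwsum : ∀ x, w x = ∑ k : Fin 3, (pd k v x) ^ 2 := fun x => by rw [hw_def]
  have hwnn : ∀ x, 0 ≤ w x := fun x => by
    rw [hwsum]; exact Finset.sum_nonneg fun k _ => sq_nonneg _
  have hpdper : ∀ k, Periodic3 (pd k v) := fun k => periodic_pd v hv hper k
  have hwper : Periodic3 w := by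
    intro x i; rw [hwsum, hwsum]
    exact Finset.sum_congr rfl fun k _ => by rw [hpdper k x i]
  have hFc : ∀ i : Fin 3, ContDiff ℝ (⊤ : ℕ∞) (fun y => (v y)⁻¹ * w y ^ 2 * pd i v y) :=
    fun i => ((hv.inv hvne).mul (hw.pow 2)).mul (hpd i)
  have hFper : ∀ i : Fin 3, Periodic3 (fun y => (v y)⁻¹ * w y ^ 2 * pd i v y) := by
    intro i x j
    simp only
    rw [hper x j, hwper x j, hpdper i x j]
  have hzero : ∫ x in T3, ∑ i : Fin 3, pd i (fun y => (v y)⁻¹ * w y ^ 2 * pd i v y) x = 0 :=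
    integral_pd_div_eq_zero _ hFc hFper
  have hdiv : ∀ x, (∑ i : Fin 3, pd i (fun y => (v y)⁻¹ * w y ^ 2 * pd i v y) x)
      = -((v x ^ 2)⁻¹ * w x ^ 3)
        + ((v x)⁻¹ * w x ^ 2 * (∑ i : Fin 3, pd i (pd i v) x)
          + 2 * (v x)⁻¹ * w x * (∑ i : Fin 3, pd i v x * pd i w x)) := by
    intro x
    have hform : ∀ i : Fin 3, pd i (fun y => (v y)⁻¹ * w y ^ 2 * pd i v y) x
        = -((v x ^ 2)⁻¹) * pd i v x * w x ^ 2 * pd i v x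
          + 2 * (v x)⁻¹ * w x * pd i w x * pd i v x
          + (v x)⁻¹ * w x ^ 2 * pd i (pd i v) x :=
      fun i => pd_formula i v w (pd i v) x hv hw (hpd i) (hvne x)
    rw [Finset.sum_congr rfl fun i _ => hform i, Finset.sum_add_distrib,
      Finset.sum_add_distrib]
    have e1 : ∑ i : Fin 3, -((v x ^ 2)⁻¹) * pd i v x * w x ^ 2 * pd i v x
        = -((v x ^ 2)⁻¹ * w x ^ 3) := by
      calc ∑ i : Fin 3, -((v x ^ 2)⁻¹) * pd i v x * w x ^ 2 * pd i v x
          = ∑ i : Fin 3, (-((v x ^ 2)⁻¹) * w x ^ 2) * pd i v x ^ 2 :=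
            Finset.sum_congr rfl fun i _ => by ring
        _ = (-((v x ^ 2)⁻¹) * w x ^ 2) * ∑ i : Fin 3, pd i v x ^ 2 :=
            (Finset.mul_sum _ _ _).symm
        _ = -((v x ^ 2)⁻¹ * w x ^ 3) := by rw [← hwsum x]; ring
    have e2 : ∑ i : Fin 3, 2 * (v x)⁻¹ * w x * pd i w x * pd i v x
        = 2 * (v x)⁻¹ * w x * (∑ i : Fin 3, pd i v x * pd i w x) := by
      rw [Finset.mul_sum]
      exact Finset.sum_congr rfl fun i _ => by ring
    have e3 : ∑ i : Fin 3, (v x)⁻¹ * w x ^ 2 * pd i (pd i v) x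
        = (v x)⁻¹ * w x ^ 2 * (∑ i : Fin 3, pd i (pd i v) x) :=
      (Finset.mul_sum _ _ _).symm
    rw [e1, e2, e3]
    ring
  -- continuity facts
  have hc1 : Continuous fun x => (v x ^ 2)⁻¹ * w x ^ 3 :=
    (((hv.pow 2).inv fun x => pow_ne_zero 2 (hvne x)).mul (hw.pow 3)).continuous
  have hcD : Continuous fun x => ∑ i : Fin 3, pd i (pd i v) x :=
    continuous_finset_sum _ fun i _ => (contDiff_pd _ (hpd i) i).continuous
  have hc2 : Continuous fun x => (v x)⁻¹ * w x ^ 2 * (∑ i : Fin 3, pd i (pd i v) x) :=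
    (((hv.inv hvne).mul (hw.pow 2)).continuous).mul hcD
  have hcP : Continuous fun x => ∑ i : Fin 3, pd i v x * pd i w x :=
    continuous_finset_sum _ fun i _ =>
      ((hpd i).continuous).mul ((contDiff_pd _ hw i).continuous)
  have hc3 : Continuous fun x => 2 * (v x)⁻¹ * w x * (∑ i : Fin 3, pd i v x * pd i w x) :=
    ((((contDiff_const (c := (2:ℝ))).mul (hv.inv hvne)).mul hw).continuous).mul hcP
  have hcH2 : Continuous fun x => w x * (∑ i : Fin 3, pd i (pd i v) x) ^ 2 :=
    hw.continuous.mul (hcD.pow 2)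
  have hcH3 : Continuous fun x => ∑ i : Fin 3, (pd i w x) ^ 2 :=
    continuous_finset_sum _ fun i _ => ((contDiff_pd _ hw i).continuous.pow 2)
  have hint1 : IntegrableOn (fun x => (v x ^ 2)⁻¹ * w x ^ 3) T3 := integrableOn_T3 _ hc1
  have hint23 : IntegrableOn (fun x => (v x)⁻¹ * w x ^ 2 * (∑ i : Fin 3, pd i (pd i v) x)
      + 2 * (v x)⁻¹ * w x * (∑ i : Fin 3, pd i v x * pd i w x)) T3 :=
    integrableOn_T3 _ (hc2.add hc3)
  have hintH2 : IntegrableOn (fun x => w x * (∑ i : Fin 3, pd i (pd i v) x) ^ 2) T3 :=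
    integrableOn_T3 _ hcH2
  have hintH3 : IntegrableOn (fun x => ∑ i : Fin 3, (pd i w x) ^ 2) T3 :=
    integrableOn_T3 _ hcH3
  have hzero' : ∫ x in T3, (-((v x ^ 2)⁻¹ * w x ^ 3)
      + ((v x)⁻¹ * w x ^ 2 * (∑ i : Fin 3, pd i (pd i v) x)
        + 2 * (v x)⁻¹ * w x * (∑ i : Fin 3, pd i v x * pd i w x))) = 0 := by
    rw [← hzero]
    exact setIntegral_congr_fun hT3meas fun x _ => (hdiv x).symm
  have hint1n : IntegrableOn (fun x => -((v x ^ 2)⁻¹ * w x ^ 3)) T3 := hint1.neg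
  rw [integral_add hint1n hint23, integral_neg] at hzero'
  have hA : (∫ x in T3, (v x ^ 2)⁻¹ * w x ^ 3)
      = ∫ x in T3, ((v x)⁻¹ * w x ^ 2 * (∑ i : Fin 3, pd i (pd i v) x)
        + 2 * (v x)⁻¹ * w x * (∑ i : Fin 3, pd i v x * pd i w x)) := by linarith
  have hb : ∀ x ∈ T3, (v x)⁻¹ * w x ^ 2 * (∑ i : Fin 3, pd i (pd i v) x)
        + 2 * (v x)⁻¹ * w x * (∑ i : Fin 3, pd i v x * pd i w x)
      ≤ (1 / 2) * ((v x ^ 2)⁻¹ * w x ^ 3)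
        + w x * (∑ i : Fin 3, pd i (pd i v) x) ^ 2
        + 4 * ∑ i : Fin 3, (pd i w x) ^ 2 := by
    intro x _
    have hCS : (∑ i : Fin 3, pd i v x * pd i w x) ^ 2
        ≤ w x * ∑ i : Fin 3, (pd i w x) ^ 2 := by
      rw [hwsum x]
      exact Finset.sum_mul_sq_le_sq_mul_sq _ _ _
    exact pointwise_ineq (v x) (w x) _ _ _ (hvpos x) (hwnn x)
      (Finset.sum_nonneg fun i _ => sq_nonneg _) hCS
  have hmono := setIntegral_mono_on hint23
    (integrableOn_T3 _ (((continuous_const.mul hc1).add hcH2).add (continuous_const.mul hcH3)))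
    hT3meas hb
  have hintR1 : IntegrableOn (fun x => 1 / 2 * ((v x ^ 2)⁻¹ * w x ^ 3)) T3 :=
    hint1.const_mul _
  have hintR12 : IntegrableOn (fun x => 1 / 2 * ((v x ^ 2)⁻¹ * w x ^ 3)
      + w x * (∑ i : Fin 3, pd i (pd i v) x) ^ 2) T3 := hintR1.add hintH2
  have hintR3 : IntegrableOn (fun x => 4 * ∑ i : Fin 3, pd i w x ^ 2) T3 :=
    hintH3.const_mul _
  simp only [Pi.add_apply, Pi.mul_apply] at hmono
  rw [integral_add hintR12 hintR3, integral_add hintR1 hintH2,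
    integral_const_mul, integral_const_mul] at hmono
  linarith

theorem grad_six_power_estimate
    (v : (Fin 3 → ℝ) → ℝ) (hv : ContDiff ℝ (⊤ : ℕ∞) v) (hvpos : ∀ x, 0 < v x)
    (hper : Periodic3 v) :
    (∫ x in T3, (v x ^ 2)⁻¹ * (∑ i : Fin 3, (pd i v x) ^ 2) ^ 3)
      ≤ 2 * (∫ x in T3,
            (∑ i : Fin 3, (pd i v x) ^ 2) * (∑ i : Fin 3, pd i (pd i v) x) ^ 2)
        + 8 * (∫ x in T3,
            ∑ i : Fin 3, (pd i (fun y => ∑ k : Fin 3, (pd k v y) ^ 2) x) ^ 2) :=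
  main_aux v _ hv hvpos hper rfl
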